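/- arXiv:1401.7658 — 4 statements merged into one kernel-verified Lean document; each statement's English description precedes it below -/
import Mathlib

section
/- For any self-adjoint operators $X_1, \ldots, X_r$ on a finite-dimensional Hilbert space, $\big|\sum_{i=1}^r X_i\big| \le \sqrt{r}\,\big(\sum_{i=1}^r X_i^2\big)^{1/2}$ in the positive semidefinite order. -/
/-! The square root is operator monotone, so it suffices to compare squares: `|S|² = S²` for
`S = ∑ Xᵢ`, while `(√r (∑ Xᵢ²)^{1/2})² = r ∑ Xᵢ²`, and `r ∑ Xᵢ² - S² = ½ ∑ᵢⱼ (Xᵢ - Xⱼ)² ≥ 0`.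
Operator monotonicity is taken from the continuous functional calculus, with which the
eigenbasis constructions `psdSqrt` and `matAbs` agree. -/

open Matrix
open scoped ComplexOrder

noncomputable def matAbs {m : ℕ} (A : Matrix (Fin m) (Fin m) ℂ) : Matrix (Fin m) (Fin m) ℂ :=
  (Matrix.posSemidef_conjTranspose_mul_self A).1.eigenvectorUnitary.1 *
    diagonal ((↑) ∘ (√·) ∘ (Matrix.posSemidef_conjTranspose_mul_self A).1.eigenvalues) *
    (star (Matrix.posSemidef_conjTranspose_mul_self A).1.eigenvectorUnitary : Matrix (Fin m) (Fin m) ℂ)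

noncomputable def traceNorm {m : ℕ} (A : Matrix (Fin m) (Fin m) ℂ) : ℝ :=
  ((matAbs A).trace).re

open Classical in
noncomputable def psdSqrt {m : ℕ} (A : Matrix (Fin m) (Fin m) ℂ) : Matrix (Fin m) (Fin m) ℂ :=
  if h : A.PosSemidef then h.1.eigenvectorUnitary.1 * diagonal ((↑) ∘ (√·) ∘ h.1.eigenvalues) *
    (star h.1.eigenvectorUnitary : Matrix (Fin m) (Fin m) ℂ) else 0

noncomputable def fid {m : ℕ} (A B : Matrix (Fin m) (Fin m) ℂ) : ℝ :=
  traceNorm (psdSqrt A * psdSqrt B)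

noncomputable def matPosPart {m : ℕ} (A : Matrix (Fin m) (Fin m) ℂ) : Matrix (Fin m) (Fin m) ℂ :=
  (2⁻¹ : ℂ) • (matAbs A + A)

noncomputable def matNegPart {m : ℕ} (A : Matrix (Fin m) (Fin m) ℂ) : Matrix (Fin m) (Fin m) ℂ :=
  (2⁻¹ : ℂ) • (matAbs A - A)

open scoped MatrixOrder Matrix.Norms.L2Operator
open Finset

theorem sum_mul_sum_le_card_smul_sum_mul_self {A ι : Type*} [NonUnitalRing A] [StarRing A]
    [PartialOrder A] [StarOrderedRing A] [Module ℝ A] [PosSMulMono ℝ A]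
    (s : Finset ι) (X : ι → A) (hX : ∀ i ∈ s, IsSelfAdjoint (X i)) :
    (∑ i ∈ s, X i) * (∑ i ∈ s, X i) ≤ (#s : ℝ) • ∑ i ∈ s, X i * X i := by
  have expand (i j : ι) :
      (X i - X j) * (X i - X j) = X i * X i - X i * X j - X j * X i + X j * X j := by
    noncomm_ring
  have sum_sq_sub : ∑ i ∈ s, ∑ j ∈ s, (X i - X j) * (X i - X j) =
      (2 : ℝ) • ((#s : ℝ) • ∑ i ∈ s, X i * X i - (∑ i ∈ s, X i) * (∑ i ∈ s, X i)) := by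
    simp only [expand, sum_add_distrib, sum_sub_distrib, sum_const, ← sum_mul, ← mul_sum,
      ← smul_sum]
    rw [Nat.cast_smul_eq_nsmul, two_smul]
    abel
  have twice_nonneg : 0 ≤ (2 : ℝ) • ((#s : ℝ) • ∑ i ∈ s, X i * X i - (∑ i ∈ s, X i) * (∑ i ∈ s, X i)) :=
    sum_sq_sub ▸ sum_nonneg fun i hi => sum_nonneg fun j hj =>
      ((hX i hi).sub (hX j hj)).mul_self_nonneg
  rw [← sub_nonneg]
  simpa using smul_nonneg (by norm_num : (0 : ℝ) ≤ 2⁻¹) twice_nonneg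

theorem CFC.sqrt_smul {A : Type*} [CStarAlgebra A] [PartialOrder A] [StarOrderedRing A]
    {c : ℝ} (hc : 0 ≤ c) {a : A} (ha : 0 ≤ a) : sqrt (c • a) = √c • sqrt a := by
  refine sqrt_unique ?_ (smul_nonneg (Real.sqrt_nonneg c) (sqrt_nonneg a))
  rw [smul_mul_smul_comm, Real.mul_self_sqrt hc, sqrt_mul_sqrt_self a]

theorem psdSqrt_eq_sqrt {m : ℕ} {A : Matrix (Fin m) (Fin m) ℂ} (hA : A.PosSemidef) :
    psdSqrt A = CFC.sqrt A := by
  rw [CFC.sqrt_eq_real_sqrt A hA.nonneg, cfcₙ_eq_cfc, hA.1.cfc_eq, IsHermitian.cfc,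
    Unitary.conjStarAlgAut_apply, psdSqrt, dif_pos hA]
  rfl

theorem matAbs_eq_abs {m : ℕ} (A : Matrix (Fin m) (Fin m) ℂ) : matAbs A = CFC.abs A := by
  rw [CFC.abs, star_eq_conjTranspose, ← psdSqrt_eq_sqrt (posSemidef_conjTranspose_mul_self A),
    psdSqrt, dif_pos (posSemidef_conjTranspose_mul_self A)]
  rfl

theorem abs_sum_le_sqrt_card_smul_sqrt_sum_sq {d r : ℕ}
    (X : Fin r → Matrix (Fin d) (Fin d) ℂ) (hX : ∀ i, (X i).IsHermitian) :
    (((Real.sqrt r : ℝ) : ℂ) • psdSqrt (∑ i, X i * X i) - matAbs (∑ i, X i)).PosSemidef := by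
  have hS : IsSelfAdjoint (∑ i, X i) := isSelfAdjoint_sum univ fun i _ => hX i
  have hA : 0 ≤ ∑ i, X i * X i := sum_nonneg fun i _ => IsSelfAdjoint.mul_self_nonneg (hX i)
  rw [← le_iff]
  calc matAbs (∑ i, X i) = CFC.sqrt ((∑ i, X i) * ∑ i, X i) := by
        rw [matAbs_eq_abs, CFC.abs, hS.star_eq]
    _ ≤ CFC.sqrt ((r : ℝ) • ∑ i, X i * X i) := by
      gcongr
      simpa only [card_univ, Fintype.card_fin] using
        sum_mul_sum_le_card_smul_sum_mul_self univ X fun i _ => hX i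
    _ = ((Real.sqrt r : ℝ) : ℂ) • psdSqrt (∑ i, X i * X i) := by
      rw [CFC.sqrt_smul r.cast_nonneg hA, psdSqrt_eq_sqrt (nonneg_iff_posSemidef.mp hA),
        Complex.coe_smul]
end

section
/- Let $A_1, \ldots, A_r$ be self-adjoint operators on a finite-dimensional Hilbert space. Then the set $\{Y : Y \ge A_k \text{ for all } k\}$ contains a unique element of minimal trace. That is, if $Y_1, Y_2$ both satisfy $Y_i \ge A_k$ for all $k$ and both have trace equal to $\min\{\operatorname{Tr} Y : Y \ge A_k \,\forall k\}$, then $Y_1 = Y_2$. -/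
open Matrix
open scoped ComplexOrder

/-!
If `Y₁ ≠ Y₂` are both feasible with the minimal trace, write `Pₖ = Y₁ - Aₖ`, `Qₖ = Y₂ - Aₖ` and
`D = Y₁ - Y₂ = Pₖ - Qₖ`. Since `(P - Q)² ≤ 2(P² + Q²) ≤ 2(‖P‖ + ‖Q‖)(P + Q)` for `P, Q ≥ 0`, the
midpoint `(Y₁ + Y₂)/2`, whose slack over `Aₖ` is `(Pₖ + Qₖ)/2`, stays feasible after subtracting
`c DᴴD` for a small `c > 0`. That lowers the trace by `c Tr(DᴴD) > 0`, contradicting minimality.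
-/

namespace CStarAlgebra

variable {A : Type*} [NonUnitalCStarAlgebra A] [PartialOrder A] [StarOrderedRing A]

lemma mul_self_le_norm_smul {a : A} (ha : 0 ≤ a) : a * a ≤ ‖a‖ • a := by
  have hs := CFC.sqrt_mul_sqrt_self a ha
  have h := star_left_conjugate_le_norm_smul (a := CFC.sqrt a) (b := a) ha.isSelfAdjoint
  rw [(CFC.sqrt_nonneg a).isSelfAdjoint.star_eq, hs] at h
  convert h using 1
  conv_lhs => rw [← hs]
  rw [← mul_assoc, mul_assoc (CFC.sqrt a) (CFC.sqrt a), hs]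

lemma star_sub_mul_sub_le_smul_add {a b : A} (ha : 0 ≤ a) (hb : 0 ≤ b) {t : ℝ}
    (ht : ‖a‖ + ‖b‖ ≤ t) : star (a - b) * (a - b) ≤ (2 * t) • (a + b) := by
  have hab : 0 ≤ a + b := add_nonneg ha hb
  calc star (a - b) * (a - b)
      ≤ (a - b) * (a - b) + (a + b) * (a + b) := by
        rw [(ha.isSelfAdjoint.sub hb.isSelfAdjoint).star_eq]
        exact le_add_of_nonneg_right hab.isSelfAdjoint.mul_self_nonneg
    _ = (2 : ℝ) • (a * a + b * b) := by rw [two_smul]; noncomm_ring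
    _ ≤ (2 : ℝ) • (‖a‖ • a + ‖b‖ • b) := by
        gcongr
        exacts [mul_self_le_norm_smul ha, mul_self_le_norm_smul hb]
    _ ≤ (2 * (‖a‖ + ‖b‖)) • (a + b) := by
        rw [mul_smul, add_smul, smul_add, smul_add]
        gcongr
        exacts [le_add_of_nonneg_right hb, le_add_of_nonneg_left ha]
    _ ≤ (2 * t) • (a + b) := by gcongr

end CStarAlgebra

lemma Matrix.eq_zero_of_re_trace_conjTranspose_mul_self_nonpos {𝕜 m n : Type*} [RCLike 𝕜]
    [Fintype m] [Fintype n] {D : Matrix m n 𝕜} (h : RCLike.re (Dᴴ * D).trace ≤ 0) : D = 0 := by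
  have h0 := (posSemidef_conjTranspose_mul_self D).trace_nonneg
  rw [← trace_conjTranspose_mul_self_eq_zero_iff]
  refine le_antisymm (RCLike.le_iff_re_im.mpr ⟨?_, ?_⟩) h0
  · simpa using h
  · simpa using (RCLike.nonneg_iff.mp h0).2

open scoped MatrixOrder Matrix.Norms.L2Operator

theorem lub_unique_general {d r : ℕ} (A : Fin r → Matrix (Fin d) (Fin d) ℂ)
    (Y₁ Y₂ : Matrix (Fin d) (Fin d) ℂ)
    (h₁ : ∀ k, (Y₁ - A k).PosSemidef) (h₂ : ∀ k, (Y₂ - A k).PosSemidef)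
    (hmin₁ : ∀ Y : Matrix (Fin d) (Fin d) ℂ, (∀ k, (Y - A k).PosSemidef) →
      (Y₁.trace).re ≤ (Y.trace).re)
    (hmin₂ : ∀ Y : Matrix (Fin d) (Fin d) ℂ, (∀ k, (Y - A k).PosSemidef) →
      (Y₂.trace).re ≤ (Y.trace).re) :
    Y₁ = Y₂ := by
  set D := Y₁ - Y₂
  set t : ℝ := 1 + ∑ k, (‖Y₁ - A k‖ + ‖Y₂ - A k‖)
  have ht : 0 < t := by positivity
  have hslack k : (4 * t)⁻¹ • (Dᴴ * D) ≤ (2⁻¹ : ℝ) • ((Y₁ - A k) + (Y₂ - A k)) := by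
    have hD : D = (Y₁ - A k) - (Y₂ - A k) := (sub_sub_sub_cancel_right _ _ _).symm
    have hk : ‖Y₁ - A k‖ + ‖Y₂ - A k‖ ≤ t := le_add_of_nonneg_of_le zero_le_one <|
      Finset.single_le_sum (f := fun k => ‖Y₁ - A k‖ + ‖Y₂ - A k‖) (fun _ _ => by positivity)
        (Finset.mem_univ k)
    calc (4 * t)⁻¹ • (Dᴴ * D) ≤ (4 * t)⁻¹ • ((2 * t) • ((Y₁ - A k) + (Y₂ - A k))) := by
          rw [hD]
          gcongr
          exact CStarAlgebra.star_sub_mul_sub_le_smul_add (h₁ k).nonneg (h₂ k).nonneg hk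
      _ = (2⁻¹ : ℝ) • ((Y₁ - A k) + (Y₂ - A k)) := by
          rw [smul_smul]; congr 1; field_simp; norm_num
  set Y := (2⁻¹ : ℝ) • (Y₁ + Y₂) - (4 * t)⁻¹ • (Dᴴ * D)
  have hY k : (Y - A k).PosSemidef := by
    rw [← Matrix.le_iff, ← sub_nonneg]
    convert sub_nonneg.mpr (hslack k) using 1
    module
  have htr : Y₁.trace.re = Y₂.trace.re := le_antisymm (hmin₁ Y₂ h₂) (hmin₂ Y₁ h₁)
  have hcorr : (4 * t)⁻¹ * (Dᴴ * D).trace.re ≤ 0 := by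
    have := hmin₁ Y hY
    simp only [Y, trace_sub, trace_smul, trace_add, Complex.sub_re, Complex.smul_re,
      Complex.add_re, htr, smul_eq_mul] at this
    linarith
  exact sub_eq_zero.mp <| Matrix.eq_zero_of_re_trace_conjTranspose_mul_self_nonpos <|
    nonpos_of_mul_nonpos_right hcorr (by positivity)

theorem lub_unique {d r : ℕ} (A : Fin r → Matrix (Fin d) (Fin d) ℂ)
    (hA : ∀ k, (A k).IsHermitian)
    (Y₁ Y₂ : Matrix (Fin d) (Fin d) ℂ)
    (h₁ : ∀ k, (Y₁ - A k).PosSemidef) (h₂ : ∀ k, (Y₂ - A k).PosSemidef)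
    (hmin₁ : ∀ Y : Matrix (Fin d) (Fin d) ℂ, (∀ k, (Y - A k).PosSemidef) →
      (Y₁.trace).re ≤ (Y.trace).re)
    (hmin₂ : ∀ Y : Matrix (Fin d) (Fin d) ℂ, (∀ k, (Y - A k).PosSemidef) →
      (Y₂.trace).re ≤ (Y.trace).re) :
    Y₁ = Y₂ :=
  lub_unique_general A Y₁ Y₂ h₁ h₂ hmin₁ hmin₂
end

section
/- For any self-adjoint operator $A$ on a finite-dimensional Hilbert space, the positive part $A_+$ is the unique minimizer of the trace over the set $\{Y : Y \ge A,\ Y \ge 0\}$: every $Y$ with $Y \ge A$ and $Y \ge 0$ satisfies $\operatorname{Tr} Y \ge \operatorname{Tr} A_+$, with equality iff $Y = A_+$. -/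
open Matrix
open scoped ComplexOrder

/-! Let `P` be the spectral projection of `A` onto its positive eigenvalues, so that `P * A = A₊`
and `0 ≤ P ≤ 1`. Then `Y = P * A + P * (Y - A) + (1 - P) * Y`, and the last two terms are
products of positive semidefinite matrices. Such a product has nonnegative trace, vanishing only
when the product itself vanishes, since `Tr (X * Z) = Tr ((√Z √X)ᴴ (√Z √X))`. Hence
`Tr Y ≥ Tr A₊`, and equality forces `P * (Y - A) = 0` and `(1 - P) * Y = 0`, that is
`Y = P * A = A₊`. -/

namespace Matrix

open scoped MatrixOrder

variable {n 𝕜 : Type*} [Fintype n] [RCLike 𝕜]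

section TraceMul

variable {X Z : Matrix n n 𝕜}

lemma PosSemidef.trace_mul_eq_trace_conjTranspose_mul_self [DecidableEq n] (hX : X.PosSemidef)
    (hZ : Z.PosSemidef) :
    (X * Z).trace = ((CFC.sqrt Z * CFC.sqrt X)ᴴ * (CFC.sqrt Z * CFC.sqrt X)).trace := by
  rw [conjTranspose_mul, (CFC.sqrt_nonneg X).posSemidef.isHermitian.eq,
    (CFC.sqrt_nonneg Z).posSemidef.isHermitian.eq]
  conv_lhs => rw [← CFC.sqrt_mul_sqrt_self X hX.nonneg, ← CFC.sqrt_mul_sqrt_self Z hZ.nonneg]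
  simp only [mul_assoc]
  rw [trace_mul_comm]
  simp only [mul_assoc]

lemma PosSemidef.trace_mul_nonneg (hX : X.PosSemidef) (hZ : Z.PosSemidef) :
    0 ≤ (X * Z).trace := by
  classical
  rw [hX.trace_mul_eq_trace_conjTranspose_mul_self hZ]
  exact (posSemidef_conjTranspose_mul_self _).trace_nonneg

lemma PosSemidef.mul_eq_zero_of_trace_mul_eq_zero (hX : X.PosSemidef) (hZ : Z.PosSemidef)
    (h : (X * Z).trace = 0) : X * Z = 0 := by
  classical
  rw [hX.trace_mul_eq_trace_conjTranspose_mul_self hZ,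
    trace_conjTranspose_mul_self_eq_zero_iff] at h
  have h' : CFC.sqrt X * CFC.sqrt Z = 0 := by
    simpa [(CFC.sqrt_nonneg X).posSemidef.isHermitian.eq,
      (CFC.sqrt_nonneg Z).posSemidef.isHermitian.eq] using
      congrArg (·ᴴ) h
  calc X * Z = CFC.sqrt X * (CFC.sqrt X * CFC.sqrt Z) * CFC.sqrt Z := by
        conv_lhs =>
          rw [← CFC.sqrt_mul_sqrt_self X hX.nonneg, ← CFC.sqrt_mul_sqrt_self Z hZ.nonneg]
        simp only [mul_assoc]
    _ = 0 := by rw [h', mul_zero, zero_mul]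

end TraceMul

lemma IsHermitian.exists_posSemidef_mul_eq_cfc_max [DecidableEq n] {A : Matrix n n 𝕜}
    (hA : A.IsHermitian) :
    ∃ P : Matrix n n 𝕜, P.PosSemidef ∧ (1 - P).PosSemidef ∧
      P * A = cfc (fun x : ℝ => max x 0) A := by
  have hcont (f : ℝ → ℝ) : ContinuousOn f (spectrum ℝ A) :=
    A.finite_real_spectrum.continuousOn f
  set χ : ℝ → ℝ := fun x => if 0 < x then 1 else 0
  have hχ : ∀ x, 0 ≤ χ x ∧ χ x ≤ 1 := fun x => by by_cases h : 0 < x <;> simp [χ, h]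
  refine ⟨cfc χ A, (cfc_nonneg fun x _ => (hχ x).1).posSemidef, ?_, ?_⟩
  · rw [← cfc_const_one ℝ A, ← cfc_sub _ _ A (hcont _) (hcont _)]
    exact (cfc_nonneg fun x _ => sub_nonneg.2 (hχ x).2).posSemidef
  · calc cfc χ A * A = cfc χ A * cfc (fun x : ℝ => x) A := by
          rw [cfc_id' ℝ A hA.isSelfAdjoint]
      _ = cfc (fun x => χ x * x) A := (cfc_mul _ _ A (hcont _) (hcont _)).symm
      _ = cfc (fun x : ℝ => max x 0) A := cfc_congr fun x _ => by
        by_cases h : 0 < x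
        · simp [χ, h, h.le]
        · simp [χ, h, not_lt.1 h]

section TraceBound

variable [DecidableEq n] {A Y P : Matrix n n 𝕜}

lemma trace_eq_trace_mul_add_trace_mul_sub_add_trace_one_sub_mul {R : Type*} [Ring R]
    (P A Y : Matrix n n R) :
    Y.trace = (P * A).trace + ((P * (Y - A)).trace + ((1 - P) * Y).trace) := by
  rw [← trace_add, ← trace_add]
  congr 1
  noncomm_ring

variable (hP : P.PosSemidef) (hP1 : (1 - P).PosSemidef) (hYA : (Y - A).PosSemidef)
  (hY : Y.PosSemidef)
include hP hP1 hYA hY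

lemma trace_mul_le_trace : (P * A).trace ≤ Y.trace := by
  rw [trace_eq_trace_mul_add_trace_mul_sub_add_trace_one_sub_mul P A Y]
  exact le_add_of_nonneg_right (add_nonneg (hP.trace_mul_nonneg hYA) (hP1.trace_mul_nonneg hY))

lemma eq_mul_of_trace_eq (h : Y.trace = (P * A).trace) : Y = P * A := by
  rw [trace_eq_trace_mul_add_trace_mul_sub_add_trace_one_sub_mul P A Y, add_eq_left,
    add_eq_zero_iff_of_nonneg (hP.trace_mul_nonneg hYA) (hP1.trace_mul_nonneg hY)] at h
  have h₁ := hP.mul_eq_zero_of_trace_mul_eq_zero hYA h.1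
  have h₂ := hP1.mul_eq_zero_of_trace_mul_eq_zero hY h.2
  rw [mul_sub, sub_eq_zero] at h₁
  rw [sub_mul, one_mul, sub_eq_zero] at h₂
  exact h₂.trans h₁

end TraceBound

lemma matAbs_eq_cfc_sqrt {m : ℕ} (A : Matrix (Fin m) (Fin m) ℂ) :
    matAbs A = cfc Real.sqrt (Aᴴ * A) := by
  rw [(isHermitian_conjTranspose_mul_self A).cfc_eq, IsHermitian.cfc, Unitary.conjStarAlgAut_apply]
  rfl

lemma IsHermitian.matAbs_eq_cfc_abs {m : ℕ} {A : Matrix (Fin m) (Fin m) ℂ}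
    (hA : A.IsHermitian) :
    matAbs A = cfc (fun x : ℝ => |x|) A := by
  have hsq : Aᴴ * A = cfc (fun x : ℝ => x * x) A := by
    rw [cfc_mul (fun x : ℝ => x) (fun x : ℝ => x) A, cfc_id' ℝ A hA.isSelfAdjoint, hA.eq]
  rw [matAbs_eq_cfc_sqrt, hsq, ← cfc_comp' Real.sqrt (fun x : ℝ => x * x) A]
  exact cfc_congr fun x _ => Real.sqrt_mul_self_eq_abs x

lemma IsHermitian.matPosPart_eq_cfc_max {m : ℕ} {A : Matrix (Fin m) (Fin m) ℂ}
    (hA : A.IsHermitian) : matPosPart A = cfc (fun x : ℝ => max x 0) A := by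
  rw [matPosPart, hA.matAbs_eq_cfc_abs, show (2⁻¹ : ℂ) = ((2⁻¹ : ℝ) : ℂ) by norm_num,
    Complex.coe_smul]
  calc (2⁻¹ : ℝ) • (cfc (fun x : ℝ => |x|) A + A)
      = (2⁻¹ : ℝ) • (cfc (fun x : ℝ => |x|) A + cfc (fun x : ℝ => x) A) := by
        rw [cfc_id' ℝ A hA.isSelfAdjoint]
    _ = cfc (fun x : ℝ => (2⁻¹ : ℝ) • (|x| + x)) A := by
        rw [cfc_smul _ (fun x : ℝ => |x| + x) A,
          cfc_add A (fun x : ℝ => |x|) (fun x : ℝ => x)]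
    _ = cfc (fun x : ℝ => max x 0) A := cfc_congr fun x _ => by
      rcases le_total x 0 with h | h
      · simp [abs_of_nonpos h, h]
      · simp [abs_of_nonneg h, h]
        ring

end Matrix

theorem posPart_eq_lub {d : ℕ} (A Y : Matrix (Fin d) (Fin d) ℂ) (hA : A.IsHermitian)
    (hYA : (Y - A).PosSemidef) (hY0 : Y.PosSemidef) :
    ((matPosPart A).trace).re ≤ (Y.trace).re ∧
    ((Y.trace).re = ((matPosPart A).trace).re ↔ Y = matPosPart A) := by
  obtain ⟨P, hP, hP1, hPA⟩ := hA.exists_posSemidef_mul_eq_cfc_max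
  rw [← hA.matPosPart_eq_cfc_max] at hPA
  obtain ⟨hre, him⟩ := Complex.le_def.1 (trace_mul_le_trace hP hP1 hYA hY0)
  rw [← hPA]
  exact ⟨hre, fun h => eq_mul_of_trace_eq hP hP1 hYA hY0 (Complex.ext h him.symm),
    fun h => by rw [h]⟩
end

section
/- Let $A_1, \ldots, A_r$ be positive semidefinite operators on a finite-dimensional Hilbert space and let $1 \le K \le r$. Let $P_e^*$ denote the optimal error probability functional $P_e^*(B_1,\ldots,B_m) := \min\{\sum_i \operatorname{Tr} B_i(I - E_i) : E_i \ge 0, \sum_i E_i \le I\}$. Then $P_e^*(A_1,\ldots,A_r) \le 2\, P_e^*(A_1,\ldots,A_K) + P_e^*\big(3 \sum_{i=1}^K A_i,\, A_{K+1},\ldots,A_r\big)$. -/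
open Matrix
open scoped ComplexOrder

/-- Optimal error probability of discriminating the hypotheses `B i` with POVMs. -/
noncomputable def multiErr {d m : ℕ} (B : Fin m → Matrix (Fin d) (Fin d) ℂ) : ℝ :=
  sInf {x : ℝ | ∃ E : Fin m → Matrix (Fin d) (Fin d) ℂ,
    (∀ i, (E i).PosSemidef) ∧ (1 - ∑ i, E i).PosSemidef ∧
    x = ∑ i, ((B i * (1 - E i)).trace).re}

/-! Let `E` be a POVM for `A₁, …, A_K` and `F₀, F₁, …, F_{r-K}` a POVM for
`3 ∑ᵢ Aᵢ, A_{K+1}, …, A_r`. Refining the outcome `F₀` by `E` gives the POVM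
`F₀ E₁ F₀, …, F₀ E_K F₀, F₁, …, F_{r-K}` for `A₁, …, A_r`, since `F₀² ≤ F₀`. Its error is at most
`2 (error of E) + (error of F)` because of the per-hypothesis bound
`Tr A (1 - F₀ E F₀) ≤ 2 Tr A (1 - E) + 3 Tr A (1 - F₀)`, which follows from an operator identity
in which every remaining term is a conjugate of a positive semidefinite matrix. -/

open scoped MatrixOrder

namespace Matrix

variable {n : Type*} [Fintype n]

lemma PosSemidef.mul_mul_of_isHermitian {A B : Matrix n n ℂ} (hA : A.PosSemidef)
    (hB : B.IsHermitian) : (B * A * B).PosSemidef := by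
  simpa only [hB.eq] using hA.mul_mul_conjTranspose_same B

variable [DecidableEq n]

lemma PosSemidef.re_trace_mul_nonneg {P Q : Matrix n n ℂ} (hP : P.PosSemidef)
    (hQ : Q.PosSemidef) : 0 ≤ (P * Q).trace.re := by
  set S := CFC.sqrt Q
  have hS : Sᴴ = S := (CFC.sqrt_nonneg Q).posSemidef.isHermitian
  have hSS : S * S = Q := CFC.sqrt_mul_sqrt_self Q hQ.nonneg
  have htrace : (P * Q).trace = (S * P * Sᴴ).trace := by
    rw [hS, ← hSS, ← Matrix.mul_assoc, trace_mul_comm, Matrix.mul_assoc]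
  rw [htrace]
  exact (Complex.nonneg_iff.mp (hP.mul_mul_conjTranspose_same S).trace_nonneg).1

lemma PosSemidef.sub_mul_self {F : Matrix n n ℂ} (hF : F.PosSemidef)
    (hF1 : (1 - F).PosSemidef) : (F - F * F).PosSemidef := by
  have hsplit : F - F * F = F * (1 - F) * F + (1 - F) * F * (1 - F) := by noncomm_ring
  rw [hsplit]
  exact (hF1.mul_mul_of_isHermitian hF.isHermitian).add (hF.mul_mul_of_isHermitian hF1.isHermitian)

lemma re_trace_mul_one_sub_mul_mul_le {A E F : Matrix n n ℂ} (hA : A.PosSemidef)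
    (hE : E.PosSemidef) (hE1 : (1 - E).PosSemidef) (hF : F.PosSemidef)
    (hF1 : (1 - F).PosSemidef) :
    (A * (1 - F * E * F)).trace.re ≤ 2 * (A * (1 - E)).trace.re + 3 * (A * (1 - F)).trace.re := by
  have h2F : (2 - F).IsHermitian := by
    rw [← one_add_one_eq_two, add_sub_assoc]
    exact isHermitian_one.add hF1.isHermitian
  set gap := (2 - F) * (1 - E) * (2 - F) + ((1 - F) * E * (1 - F) + (1 - F) * E * (1 - F)) +
    (F - F * F)
  have hgap : gap.PosSemidef :=
    ((hE1.mul_mul_of_isHermitian h2F).add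
      ((hE.mul_mul_of_isHermitian hF1.isHermitian).add
        (hE.mul_mul_of_isHermitian hF1.isHermitian))).add (hF.sub_mul_self hF1)
  have hid : (1 - F * E * F) + gap = (1 - E) + (1 - E) + ((1 - F) + (1 - F) + (1 - F)) := by
    simp only [gap, ← one_add_one_eq_two]; noncomm_ring
  have htrace := congrArg (fun M => (A * M).trace.re) hid
  simp only [Matrix.mul_add, trace_add, Complex.add_re] at htrace
  have := hA.re_trace_mul_nonneg hgap
  linarith

end Matrix

section POVM

variable {ι ι' n : Type*} [Fintype ι] [Fintype ι'] [DecidableEq n]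

def IsPOVM (E : ι → Matrix n n ℂ) : Prop :=
  (∀ i, (E i).PosSemidef) ∧ (1 - ∑ i, E i).PosSemidef

noncomputable def errorProb [Fintype n] (B E : ι → Matrix n n ℂ) : ℝ :=
  ∑ i, (B i * (1 - E i)).trace.re

lemma isPOVM_zero : IsPOVM (0 : ι → Matrix n n ℂ) :=
  ⟨fun _ => .zero, by simpa using PosSemidef.one⟩

lemma IsPOVM.one_sub {E : ι → Matrix n n ℂ} (hE : IsPOVM E) (i : ι) : (1 - E i).PosSemidef := by
  classical
  have hsplit : 1 - E i = (1 - ∑ j, E j) + ∑ j ∈ Finset.univ.erase i, E j := by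
    rw [← Finset.sum_erase_add _ _ (Finset.mem_univ i)]; abel
  rw [hsplit]
  exact hE.2.add (posSemidef_sum _ fun j _ => hE.1 j)

lemma IsPOVM.comp_equiv {E : ι → Matrix n n ℂ} (hE : IsPOVM E) (e : ι' ≃ ι) : IsPOVM (E ∘ e) :=
  ⟨fun i => hE.1 (e i), by simpa only [Function.comp, e.sum_comp] using hE.2⟩

variable [Fintype n]

lemma errorProb_comp_equiv (B E : ι → Matrix n n ℂ) (e : ι' ≃ ι) :
    errorProb (B ∘ e) (E ∘ e) = errorProb B E :=
  e.sum_comp fun i => (B i * (1 - E i)).trace.re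

lemma errorProb_nonneg {B E : ι → Matrix n n ℂ} (hB : ∀ i, (B i).PosSemidef) (hE : IsPOVM E) :
    0 ≤ errorProb B E :=
  Finset.sum_nonneg fun i _ => Matrix.PosSemidef.re_trace_mul_nonneg (hB i) (hE.one_sub i)

end POVM

section multiErr

variable {d m m' : ℕ}

lemma multiErr_eq_sInf_image (B : Fin m → Matrix (Fin d) (Fin d) ℂ) :
    multiErr B = sInf (errorProb B '' {E | IsPOVM E}) := by
  simp only [multiErr, Set.image, IsPOVM, Set.mem_ofPred_eq, errorProb, eq_comm, and_assoc]

lemma errorProb_image_nonempty (B : Fin m → Matrix (Fin d) (Fin d) ℂ) :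
    (errorProb B '' {E | IsPOVM E}).Nonempty :=
  ⟨_, Set.mem_image_of_mem _ isPOVM_zero⟩

lemma multiErr_le_errorProb {B E : Fin m → Matrix (Fin d) (Fin d) ℂ}
    (hB : ∀ i, (B i).PosSemidef) (hE : IsPOVM E) : multiErr B ≤ errorProb B E := by
  rw [multiErr_eq_sInf_image]
  exact csInf_le ⟨0, Set.forall_mem_image.2 fun _ hE' => errorProb_nonneg hB hE'⟩
    (Set.mem_image_of_mem _ hE)

lemma multiErr_comp_equiv (B : Fin m' → Matrix (Fin d) (Fin d) ℂ) (e : Fin m ≃ Fin m') :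
    multiErr (B ∘ e) = multiErr B := by
  simp only [multiErr_eq_sInf_image]
  congr 1
  ext x
  constructor
  · rintro ⟨E, hE, rfl⟩
    refine ⟨E ∘ e.symm, hE.comp_equiv e.symm, ?_⟩
    rw [← errorProb_comp_equiv B _ e]
    simp [Function.comp_def]
  · rintro ⟨E, hE, rfl⟩
    exact ⟨E ∘ e, hE.comp_equiv e, errorProb_comp_equiv B E e⟩

end multiErr

lemma le_mul_csInf_add_csInf {s t : Set ℝ} (hs : s.Nonempty) (ht : t.Nonempty) {a c : ℝ}
    (hc : 0 < c) (h : ∀ x ∈ s, ∀ y ∈ t, a ≤ c * x + y) : a ≤ c * sInf s + sInf t := by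
  have hs_bound : ∀ y ∈ t, (a - y) / c ≤ sInf s := fun y hy =>
    le_csInf hs fun x hx => by rw [div_le_iff₀' hc]; linarith [h x hx y hy]
  have ht_bound : a - c * sInf s ≤ sInf t := le_csInf ht fun y hy => by
    have := hs_bound y hy
    rw [div_le_iff₀' hc] at this
    linarith
  linarith

section refineHead

variable {n : Type*} [Fintype n] [DecidableEq n] {K L : ℕ}

def refineHead (E : Fin K → Matrix n n ℂ) (F : Fin (L + 1) → Matrix n n ℂ) :
    Fin (K + L) → Matrix n n ℂ :=
  Fin.append (fun i => F 0 * E i * F 0) (Fin.tail F)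

variable {E : Fin K → Matrix n n ℂ} {F : Fin (L + 1) → Matrix n n ℂ}

lemma isPOVM_refineHead (hE : IsPOVM E) (hF : IsPOVM F) : IsPOVM (refineHead E F) := by
  have hF0 := hF.1 0
  refine ⟨fun p => ?_, ?_⟩
  · induction p using Fin.addCases with
    | left i => simpa [refineHead] using (hE.1 i).mul_mul_of_isHermitian hF0.isHermitian
    | right j => simpa [refineHead, Fin.tail] using hF.1 j.succ
  · have hsum : 1 - ∑ i, refineHead E F i =
        (1 - ∑ i, F i) + F 0 * (1 - ∑ i, E i) * F 0 + (F 0 - F 0 * F 0) := by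
      simp only [refineHead, Fin.sum_univ_add, Fin.append_left, Fin.append_right,
        Fin.sum_univ_succ (f := F), ← Finset.mul_sum, ← Finset.sum_mul, Fin.tail]
      noncomm_ring
    rw [hsum]
    exact (hF.2.add (hE.2.mul_mul_of_isHermitian hF0.isHermitian)).add
      (hF0.sub_mul_self (hF.one_sub 0))

lemma errorProb_refineHead_le {A : Fin (K + L) → Matrix n n ℂ} (hA : ∀ i, (A i).PosSemidef)
    (hE : IsPOVM E) (hF : IsPOVM F) :
    errorProb A (refineHead E F) ≤ 2 * errorProb (fun i => A (Fin.castAdd L i)) E +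
      errorProb (Fin.cons ((3 : ℂ) • ∑ i, A (Fin.castAdd L i)) fun j => A (Fin.natAdd K j)) F := by
  have hhead : (((3 : ℂ) • ∑ i, A (Fin.castAdd L i)) * (1 - F 0)).trace.re =
      3 * ∑ i, (A (Fin.castAdd L i) * (1 - F 0)).trace.re := by
    simp [Finset.sum_mul, trace_sum, Complex.re_sum]
  have hbound := Finset.sum_le_sum fun i (_ : i ∈ Finset.univ) =>
    re_trace_mul_one_sub_mul_mul_le (hA (Fin.castAdd L i)) (hE.1 i) (hE.one_sub i) (hF.1 0)
      (hF.one_sub 0)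
  simp only [errorProb, refineHead, Fin.sum_univ_add, Fin.append_left, Fin.append_right,
    Fin.sum_univ_succ (f := fun i => (_ * (1 - F i)).trace.re), Fin.cons_zero, Fin.cons_succ,
    Fin.tail, hhead]
  rw [Finset.sum_add_distrib, ← Finset.mul_sum, ← Finset.mul_sum] at hbound
  linarith

end refineHead

theorem multiErr_le_two_mul_add_cons {d K L : ℕ} (A : Fin (K + L) → Matrix (Fin d) (Fin d) ℂ)
    (hA : ∀ i, (A i).PosSemidef) :
    multiErr A ≤ 2 * multiErr (fun i => A (Fin.castAdd L i)) +
      multiErr (Fin.cons ((3 : ℂ) • ∑ i, A (Fin.castAdd L i)) fun j => A (Fin.natAdd K j)) := by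
  rw [multiErr_eq_sInf_image (fun i => A (Fin.castAdd L i)), multiErr_eq_sInf_image (Fin.cons _ _)]
  refine le_mul_csInf_add_csInf (errorProb_image_nonempty _) (errorProb_image_nonempty _) two_pos ?_
  rintro _ ⟨E, hE, rfl⟩ _ ⟨F, hF, rfl⟩
  exact (multiErr_le_errorProb hA (isPOVM_refineHead hE hF)).trans (errorProb_refineHead_le hA hE hF)

theorem nussbaum_decomposition {d r : ℕ}
    (A : Fin r → Matrix (Fin d) (Fin d) ℂ) (hA : ∀ i, (A i).PosSemidef)
    (K : ℕ) (hKr : K ≤ r) :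
    multiErr A ≤ 2 * multiErr (fun i : Fin K => A (Fin.castLE hKr i)) +
      multiErr (Fin.cons ((3 : ℂ) • ∑ i : Fin K, A (Fin.castLE hKr i))
        (fun j : Fin (r - K) => A ⟨K + j.1, by have := j.isLt; omega⟩)) := by
  rw [← multiErr_comp_equiv A (finCongr (Nat.add_sub_cancel' hKr))]
  exact multiErr_le_two_mul_add_cons _ fun i => hA _
end
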